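/- arXiv:2601.12177 — 4 statements merged into one kernel-verified Lean document; each statement's English description precedes it below -/
import Mathlib

section
/- Let p be a prime, A a discrete valuation ring of characteristic p with fraction field K and normalized valuation v (so v(π)=1 for a uniformizer π, v(0)=+∞). For m ≥ 1 and n ∈ ℤ define fil_n W_m(K) = { x ∈ W_m(K) : for all 0 ≤ i ≤ m-1, either x_i = 0 or p^{m-1-i}·v(x_i) + n ≥ 0 }, where x_i is the i-th Witt coordinate. Then fil_n W_m(K) is an additive subgroup of the truncated Witt vector group W_m(K). -/
/-- Brylinski's filtration on truncated Witt vectors of a discretely valued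
field `K`:  `fil_n W_m(K)` consists of those `x` such that each Witt
coordinate `x_i` satisfies `x_i = 0` or `p^{m-1-i}·v(x_i) + n ≥ 0`. -/
def brylinskiFil (p : ℕ) [Fact p.Prime] {K : Type*} [Field K] (v : K → ℤ)
    (m : ℕ) (n : ℤ) : Set (TruncatedWittVector p m K) :=
  {x | ∀ i : Fin m, x.coeff i = 0 ∨ 0 ≤ (p : ℤ) ^ (m - 1 - (i : ℕ)) * v (x.coeff i) + n}


open WittVector Finset

variable {p : ℕ} [hp : Fact p.Prime]

private lemma ghost_mk_aux {R : Type*} [CommRing R] (b : R) (y : WittVector p R) (N : ℕ) :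
    ghostComponent N (WittVector.mk p (fun i => b ^ p ^ i * y.coeff i)) =
      b ^ p ^ N * ghostComponent N y := by
  rw [ghostComponent_apply, ghostComponent_apply, WittVector.coeff_mk,
    aeval_wittPolynomial, aeval_wittPolynomial, Finset.mul_sum]
  refine Finset.sum_congr rfl fun i hi => ?_
  have hi' : i ≤ N := Nat.lt_succ_iff.mp (Finset.mem_range.mp hi)
  rw [mul_pow, ← pow_mul, ← pow_add, Nat.add_sub_cancel' hi']
  ring

private lemma teich_mul_mk_univ :
    WittVector.teichmuller p (MvPolynomial.X none : MvPolynomial (Option ℕ) ℤ) *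
        WittVector.mk p (fun i => MvPolynomial.X (some i)) =
      WittVector.mk p (fun i =>
        (MvPolynomial.X none : MvPolynomial (Option ℕ) ℤ) ^ p ^ i * MvPolynomial.X (some i)) := by
  apply WittVector.map_injective (MvPolynomial.map (Int.castRingHom ℚ))
    (MvPolynomial.map_injective _ Int.cast_injective)
  letI : Invertible (p : ℚ) := invertibleOfNonzero (by exact_mod_cast hp.out.ne_zero)
  apply (WittVector.ghostMap.bijective_of_invertible p (MvPolynomial (Option ℕ) ℚ)).injective
  set F := (MvPolynomial.map (Int.castRingHom ℚ) : MvPolynomial (Option ℕ) ℤ →+* MvPolynomial (Option ℕ) ℚ)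
  have hmapmk : ∀ g : ℕ → MvPolynomial (Option ℕ) ℤ,
      WittVector.map F (WittVector.mk p g) = WittVector.mk p (fun i => F (g i)) := by
    intro g; apply WittVector.ext; intro i
    rw [WittVector.map_coeff, WittVector.coeff_mk, WittVector.coeff_mk]
  rw [RingHom.map_mul (WittVector.map F), WittVector.map_teichmuller, hmapmk, hmapmk]
  funext N
  rw [ghostMap_apply, ghostMap_apply, RingHom.map_mul (ghostComponent N),
    WittVector.ghostComponent_teichmuller]
  have : (fun i => F (MvPolynomial.X none ^ p ^ i * MvPolynomial.X (some i))) =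
      (fun i => (F (MvPolynomial.X none)) ^ p ^ i *
        (WittVector.mk p (fun j => F (MvPolynomial.X (some j)))).coeff i) := by
    funext i
    rw [WittVector.coeff_mk, map_mul, map_pow]
  rw [this, ghost_mk_aux]

theorem teichmuller_mul_coeff {R : Type*} [CommRing R] (a : R) (x : WittVector p R) (k : ℕ) :
    (WittVector.teichmuller p a * x).coeff k = a ^ p ^ k * x.coeff k := by
  let f : MvPolynomial (Option ℕ) ℤ →+* R :=
    (MvPolynomial.aeval (fun o : Option ℕ => o.elim a fun j => x.coeff j)).toRingHom
  have hfa : f (MvPolynomial.X none) = a := by simp [f]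
  have hfx : WittVector.map f (WittVector.mk p fun i => MvPolynomial.X (some i)) = x := by
    apply WittVector.ext; intro i
    rw [WittVector.map_coeff, WittVector.coeff_mk]; simp [f]
  have h1 : WittVector.map f (WittVector.teichmuller p (MvPolynomial.X none) *
      WittVector.mk p fun i => MvPolynomial.X (some i)) = WittVector.teichmuller p a * x := by
    rw [RingHom.map_mul, WittVector.map_teichmuller, hfa, hfx]
  calc (WittVector.teichmuller p a * x).coeff k
      = (WittVector.map f (WittVector.teichmuller p (MvPolynomial.X none) *
          WittVector.mk p fun i => MvPolynomial.X (some i))).coeff k := by rw [h1]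
    _ = f ((MvPolynomial.X none : MvPolynomial (Option ℕ) ℤ) ^ p ^ k * MvPolynomial.X (some k)) := by
        rw [teich_mul_mk_univ, WittVector.map_coeff, WittVector.coeff_mk]
    _ = a ^ p ^ k * x.coeff k := by rw [map_mul, map_pow, hfa]; simp [f]


open LaurentPolynomial

section Val

variable {K : Type*} [Field K] (v : K → ℤ)

private lemma val_add
    (hv_add : ∀ x y : K, x ≠ 0 → y ≠ 0 → x + y ≠ 0 → min (v x) (v y) ≤ v (x + y))
    {M c : ℤ} (hM : 0 ≤ M) {a b : K}
    (ha : a = 0 ∨ 0 ≤ M * v a + c) (hb : b = 0 ∨ 0 ≤ M * v b + c) :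
    a + b = 0 ∨ 0 ≤ M * v (a + b) + c := by
  by_cases h0 : a = 0
  · rw [h0, zero_add]; exact hb
  by_cases h1 : b = 0
  · rw [h1, add_zero]; exact ha
  replace ha := ha.resolve_left h0
  replace hb := hb.resolve_left h1
  by_cases h2 : a + b = 0
  · exact Or.inl h2
  right
  have hmin := hv_add a b h0 h1 h2
  rcases le_total (v a) (v b) with h | h
  · have h3 : v a ≤ v (a + b) := le_trans (by simp [h]) hmin
    have h4 : M * v a ≤ M * v (a + b) := mul_le_mul_of_nonneg_left h3 hM
    linarith
  · have h3 : v b ≤ v (a + b) := le_trans (by simp [h]) hmin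
    have h4 : M * v b ≤ M * v (a + b) := mul_le_mul_of_nonneg_left h3 hM
    linarith

private lemma val_sum
    (hv_add : ∀ x y : K, x ≠ 0 → y ≠ 0 → x + y ≠ 0 → min (v x) (v y) ≤ v (x + y))
    {M c : ℤ} (hM : 0 ≤ M) {ι : Type*} (s : Finset ι) (f : ι → K)
    (h : ∀ j ∈ s, f j = 0 ∨ 0 ≤ M * v (f j) + c) :
    (∑ j ∈ s, f j) = 0 ∨ 0 ≤ M * v (∑ j ∈ s, f j) + c := by
  induction s using Finset.cons_induction with
  | empty => exact Or.inl (by simp)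
  | cons a s ha ih =>
      rw [Finset.sum_cons]
      exact val_add v hv_add hM (h a (Finset.mem_cons_self a s))
        (ih fun j hj => h j (Finset.mem_cons.mpr (Or.inr hj)))

variable (hv_mul : ∀ x y : K, x ≠ 0 → y ≠ 0 → v (x * y) = v x + v y)
variable (hv_add : ∀ x y : K, x ≠ 0 → y ≠ 0 → x + y ≠ 0 → min (v x) (v y) ≤ v (x + y))

include hv_mul in
private lemma v_one' : v 1 = 0 := by
  have := hv_mul 1 1 one_ne_zero one_ne_zero
  rw [one_mul] at this
  omega

include hv_mul in
private lemma v_neg' {a : K} (ha : a ≠ 0) : v (-a) = v a := by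
  have h1 : v (-1 : K) = 0 := by
    have := hv_mul (-1 : K) (-1) (neg_ne_zero.mpr one_ne_zero) (neg_ne_zero.mpr one_ne_zero)
    rw [neg_mul_neg, one_mul, v_one' v hv_mul] at this
    omega
  have := hv_mul (-1 : K) a (neg_ne_zero.mpr one_ne_zero) ha
  rw [neg_one_mul] at this
  rw [this, h1, zero_add]

section Subring

private lemma CT_apply {K : Type*} [Field K] (a : K) (j k : ℤ) :
    (C a * T j : LaurentPolynomial K).coeff k = if j = k then a else 0 := by
  rw [← single_eq_C_mul_T]
  exact Finsupp.single_apply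

variable (M : ℤ)

private lemma CT_mem_gauss {a : K} {j : ℤ}
    (h : a = 0 ∨ 0 ≤ M * v a + j) :
    ∀ k : ℤ, (C a * T j : LaurentPolynomial K).coeff k = 0 ∨
      0 ≤ M * v ((C a * T j : LaurentPolynomial K).coeff k) + k := by
  intro k
  rw [CT_apply]
  split_ifs with hjk
  · subst hjk; exact h
  · exact Or.inl rfl

include hv_mul hv_add in
private noncomputable def gaussSubring (hM : 0 ≤ M) : Subring (LaurentPolynomial K) where
  carrier := {f | ∀ k : ℤ, f.coeff k = 0 ∨ 0 ≤ M * v (f.coeff k) + k}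
  zero_mem' := fun k => Or.inl rfl
  one_mem' := by
    have h1 : (1 : LaurentPolynomial K) = C (1 : K) * T 0 := by
      rw [T_zero, mul_one, map_one]
    rw [h1]
    exact CT_mem_gauss v M (Or.inr (by simp [v_one' v hv_mul]))
  add_mem' := by
    intro f g hf hg k
    have : (f + g).coeff k = f.coeff k + g.coeff k := rfl
    rw [this]
    exact val_add v hv_add hM (hf k) (hg k)
  neg_mem' := by
    intro f hf k
    have h1 : (-f).coeff k = -(f.coeff k) := rfl
    rw [h1]
    rcases hf k with h | h
    · left; rw [h, neg_zero]
    · by_cases h0 : f.coeff k = 0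
      · left; rw [h0, neg_zero]
      · right; rw [v_neg' v hv_mul h0]; exact h
  mul_mem' := by
    intro f g hf hg
    have hdec : ∀ h : LaurentPolynomial K, h = ∑ j ∈ h.coeff.support, C (h.coeff j) * T j := by
      intro h
      simp_rw [← single_eq_C_mul_T]
      apply LaurentPolynomial.ext; intro a
      simp only [AddMonoidAlgebra.coeff_sum, AddMonoidAlgebra.coeff_single]
      exact congrArg (· a) (Finsupp.sum_single h.coeff).symm
    have key : f * g = ∑ j ∈ f.coeff.support, ∑ l ∈ g.coeff.support, C (f.coeff j * g.coeff l) * T (j + l) := by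
      conv_lhs => rw [hdec f, hdec g]
      rw [Finset.sum_mul]
      refine Finset.sum_congr rfl fun j _ => ?_
      rw [Finset.mul_sum]
      refine Finset.sum_congr rfl fun l _ => ?_
      rw [map_mul, T_add, mul_mul_mul_comm]
    intro k
    rw [key]
    have happ : (∑ j ∈ f.coeff.support, ∑ l ∈ g.coeff.support,
          C (f.coeff j * g.coeff l) * T (j + l) : LaurentPolynomial K).coeff k
        = ∑ j ∈ f.coeff.support, ∑ l ∈ g.coeff.support,
            ((C (f.coeff j * g.coeff l) * T (j + l) : LaurentPolynomial K).coeff k) := by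
      simp only [AddMonoidAlgebra.coeff_sum, Finset.sum_apply']
    rw [happ]
    refine val_sum v hv_add hM _ _ fun j hj => ?_
    refine val_sum v hv_add hM _ _ fun l hl => ?_
    rw [CT_apply]
    split_ifs with hjl
    · have hfj : f.coeff j ≠ 0 := Finsupp.mem_support_iff.mp hj
      have hgl : g.coeff l ≠ 0 := Finsupp.mem_support_iff.mp hl
      right
      rw [hv_mul _ _ hfj hgl, ← hjl]
      have h1 := (hf j).resolve_left hfj
      have h2 := (hg l).resolve_left hgl
      linarith
    · exact Or.inl rfl

private lemma mem_gaussSubring (hM : 0 ≤ M) (f : LaurentPolynomial K) :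
    f ∈ gaussSubring v hv_mul hv_add M hM ↔
      ∀ k : ℤ, f.coeff k = 0 ∨ 0 ≤ M * v (f.coeff k) + k := Iff.rfl

end Subring

end Val

open LaurentPolynomial in
/-- Let `K` be the fraction field of a discrete valuation ring of
characteristic `p`, with normalized valuation `v` (encoded here by a field `K`
of characteristic `p` together with a function `v : K → ℤ` which is
multiplicative and ultrametric on nonzero elements and takes the value `1` on
some uniformizer; the value `v(0) = +∞` is encoded by treating `0`
separately).  Then for every `m ≥ 1` and `n ∈ ℤ`, `fil_n W_m(K)` is an
additive subgroup of `W_m(K)`: it contains `0` and is closed under addition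
and negation. -/
theorem brylinskiFil_addSubgroup (p : ℕ) [Fact p.Prime]
    (K : Type*) [Field K] [CharP K p] (v : K → ℤ)
    (hv_mul : ∀ x y : K, x ≠ 0 → y ≠ 0 → v (x * y) = v x + v y)
    (hv_add : ∀ x y : K, x ≠ 0 → y ≠ 0 → x + y ≠ 0 → min (v x) (v y) ≤ v (x + y))
    (hv_norm : ∃ π : K, π ≠ 0 ∧ v π = 1)
    (m : ℕ) (hm : 1 ≤ m) (n : ℤ) :
    (0 : TruncatedWittVector p m K) ∈ brylinskiFil p v m n ∧
    (∀ x y : TruncatedWittVector p m K,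
        x ∈ brylinskiFil p v m n → y ∈ brylinskiFil p v m n →
          x + y ∈ brylinskiFil p v m n) ∧
    (∀ x : TruncatedWittVector p m K,
        x ∈ brylinskiFil p v m n → -x ∈ brylinskiFil p v m n) := by
  classical
  set M : ℤ := (p : ℤ) ^ (m - 1) with hMdef
  have hM : 0 ≤ M := pow_nonneg (by positivity) _
  set O := gaussSubring v hv_mul hv_add M hM with hOdef
  set ι : K →+* LaurentPolynomial K := LaurentPolynomial.C with hιdef
  set Φ : WittVector p K → WittVector p (LaurentPolynomial K) :=
    fun Z => WittVector.teichmuller p (T n) * WittVector.map ι Z with hΦdef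
  have coeffΦ : ∀ (Z : WittVector p K) (i : ℕ),
      (Φ Z).coeff i = C (Z.coeff i) * T ((p ^ i : ℕ) * n) := by
    intro Z i
    show (WittVector.teichmuller p (T n) * WittVector.map ι Z).coeff i = _
    rw [teichmuller_mul_coeff, WittVector.map_coeff, T_pow, T_mul]
  have hcond : ∀ (a : K) (i : ℕ), i < m →
      ((a = 0 ∨ 0 ≤ M * v a + ((p ^ i : ℕ) : ℤ) * n) ↔
        (a = 0 ∨ 0 ≤ (p : ℤ) ^ (m - 1 - i) * v a + n)) := by
    intro a i him
    have hsplit : M = (p : ℤ) ^ (m - 1 - i) * (p : ℤ) ^ i := by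
      rw [hMdef, ← pow_add]
      congr 1
      omega
    have hppos : (0:ℤ) < (p:ℤ) ^ i := pow_pos (by exact_mod_cast (Fact.out (p := p.Prime)).pos) i
    have hcast : ((p ^ i : ℕ) : ℤ) = (p:ℤ) ^ i := by push_cast; ring
    have he : M * v a + ((p ^ i : ℕ) : ℤ) * n
        = (p:ℤ)^i * ((p:ℤ)^(m-1-i) * v a + n) := by
      rw [hsplit, hcast]; ring
    constructor
    · rintro (h | h)
      · exact Or.inl h
      · right
        rw [he] at h
        by_contra hc
        push_neg at hc
        have := mul_neg_of_pos_of_neg hppos hc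
        omega
    · rintro (h | h)
      · exact Or.inl h
      · right
        rw [he]
        exact mul_nonneg (le_of_lt hppos) h
  have hout_ge : ∀ (z : TruncatedWittVector p m K) (i : ℕ), ¬ i < m →
      z.out.coeff i = 0 := by
    intro z i h
    show (if h' : i < m then z.coeff ⟨i, h'⟩ else 0) = 0
    rw [dif_neg h]
  have memO : ∀ z ∈ brylinskiFil p v m n, ∀ i : ℕ, (Φ z.out).coeff i ∈ O := by
    intro z hz i
    rw [coeffΦ]
    rw [hOdef, mem_gaussSubring]
    by_cases h : i < m
    · refine CT_mem_gauss v M ?_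
      rw [TruncatedWittVector.coeff_out z ⟨i, h⟩]
      exact (hcond _ i h).mpr (hz ⟨i, h⟩)
    · refine CT_mem_gauss v M ?_
      left
      exact hout_ge z i h
  have hrange : ∀ (Wv : WittVector p O) (i : ℕ),
      (WittVector.map O.subtype Wv).coeff i ∈ O := by
    intro Wv i
    rw [WittVector.map_coeff]
    exact (Wv.coeff i).2
  have hlift : ∀ (Z : WittVector p (LaurentPolynomial K)), (∀ i, Z.coeff i ∈ O) →
      ∃ Wv : WittVector p O, WittVector.map O.subtype Wv = Z := by
    intro Z hZ
    refine ⟨WittVector.mk p (fun i => ⟨Z.coeff i, hZ i⟩), ?_⟩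
    apply WittVector.ext
    intro i
    rw [WittVector.map_coeff, WittVector.coeff_mk]
    rfl
  have htrunc : ∀ z : TruncatedWittVector p m K, WittVector.truncate m z.out = z := by
    intro z
    have h1 : WittVector.truncate m z.out = WittVector.truncateFun m z.out := rfl
    rw [h1, TruncatedWittVector.truncateFun_out]
  have main : ∀ Z : WittVector p K, (∀ i : ℕ, (Φ Z).coeff i ∈ O) →
      WittVector.truncate m Z ∈ brylinskiFil p v m n := by
    intro Z hZ i
    have hi : (i : ℕ) < m := i.isLt
    have h1 := hZ (i : ℕ)
    rw [coeffΦ, hOdef, mem_gaussSubring] at h1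
    have h3 := h1 (((p ^ (i : ℕ) : ℕ) : ℤ) * n)
    rw [CT_apply, if_pos rfl] at h3
    rw [WittVector.coeff_truncate]
    exact (hcond _ _ hi).mp h3
  refine ⟨fun i => Or.inl (TruncatedWittVector.coeff_zero p m K i), ?_, ?_⟩
  · intro x y hx hy
    have hΦ : ∀ i : ℕ, (Φ (x.out + y.out)).coeff i ∈ O := by
      intro i
      have he : Φ (x.out + y.out) = Φ x.out + Φ y.out := by
        show WittVector.teichmuller p (T n) * WittVector.map ι (x.out + y.out) = _
        rw [map_add, mul_add]
      rw [he]
      obtain ⟨W1, hW1⟩ := hlift _ (memO x hx)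
      obtain ⟨W2, hW2⟩ := hlift _ (memO y hy)
      rw [← hW1, ← hW2, ← map_add]
      exact hrange _ i
    have h := main _ hΦ
    rwa [map_add, htrunc, htrunc] at h
  · intro x hx
    have hΦ : ∀ i : ℕ, (Φ (-x.out)).coeff i ∈ O := by
      intro i
      have he : Φ (-x.out) = -(Φ x.out) := by
        show WittVector.teichmuller p (T n) * WittVector.map ι (-x.out) = _
        rw [map_neg, mul_neg]
      rw [he]
      obtain ⟨W1, hW1⟩ := hlift _ (memO x hx)
      rw [← hW1, ← map_neg]
      exact hrange _ i
    have h := main _ hΦ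
    rwa [map_neg, htrunc] at h
end

section
/- With notation as in the definition of the Brylinski filtration (A a characteristic-p discrete valuation ring with fraction field K, valuation v, and fil_n W_m(K) = { x ∈ W_m(K) : x_i = 0 or p^{m-1-i}·v(x_i) + n ≥ 0 for all i }), for all integers n, n' and all x ∈ fil_n W_m(K), y ∈ fil_{n'} W_m(K), the product x·y lies in fil_{n+n'} W_m(K). In particular, fil_n W_m(K) is a W_m(A)-submodule of W_m(K). -/
open MvPolynomial Finset

namespace BrylAux

variable {R : Type*} [CommRing R] {σ τ : Type*}

theorem hom_pow {w : σ → ℕ} {φ : MvPolynomial σ R} {n : ℕ}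
    (hφ : φ.IsWeightedHomogeneous w n) (e : ℕ) :
    (φ ^ e).IsWeightedHomogeneous w (e * n) := by
  induction e with
  | zero => simpa using isWeightedHomogeneous_one R w
  | succ e ih => rw [pow_succ, Nat.succ_mul]; exact ih.mul hφ

theorem hom_sub {w : σ → ℕ} {φ ψ : MvPolynomial σ R} {n : ℕ}
    (hφ : φ.IsWeightedHomogeneous w n) (hψ : ψ.IsWeightedHomogeneous w n) :
    (φ - ψ).IsWeightedHomogeneous w n := fun d hd => by
  rw [coeff_sub] at hd
  by_cases h : coeff d φ = 0
  · exact hψ (by intro h2; simp [h, h2] at hd)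
  · exact hφ h

theorem hom_aeval {w : σ → ℕ} {u : τ → ℕ}
    (g : σ → MvPolynomial τ R) (hg : ∀ i, (g i).IsWeightedHomogeneous u (w i))
    {φ : MvPolynomial σ R} {n : ℕ} (hφ : φ.IsWeightedHomogeneous w n) :
    (aeval g φ).IsWeightedHomogeneous u n := by
  rw [φ.as_sum, map_sum]
  apply IsWeightedHomogeneous.sum
  intro d hd
  rw [aeval_monomial, Finsupp.prod]
  have h1 : (algebraMap R (MvPolynomial τ R)) (coeff d φ) = C (coeff d φ) := rfl
  rw [h1]
  have h2 : (∏ i ∈ d.support, g i ^ d i).IsWeightedHomogeneous u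
      (∑ i ∈ d.support, d i * w i) :=
    IsWeightedHomogeneous.prod d.support _ _ (fun i _ => hom_pow (hg i) (d i))
  have h3 : (∑ i ∈ d.support, d i * w i) = n := by
    have := hφ (MvPolynomial.mem_support_iff.mp hd)
    rw [Finsupp.weight_apply, Finsupp.sum] at this
    simpa [smul_eq_mul] using this
  have h4 := (isWeightedHomogeneous_C u (coeff d φ)).mul h2
  rw [h3, zero_add] at h4
  exact h4

theorem hom_rename {u : τ → ℕ} (f : σ → τ)
    {φ : MvPolynomial σ R} {n : ℕ} (hφ : φ.IsWeightedHomogeneous (u ∘ f) n) :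
    (rename f φ).IsWeightedHomogeneous u n := by
  have : rename f φ = aeval (fun i => X (f i)) φ := by rw [rename_eq_aeval]; rfl
  rw [this]
  exact hom_aeval _ (fun i => isWeightedHomogeneous_X R u (f i)) hφ

theorem hom_zero_weight (φ : MvPolynomial σ R) :
    φ.IsWeightedHomogeneous (fun _ => (0:ℕ)) 0 := fun d _ => by
  simp [Finsupp.weight_apply, Finsupp.sum]

end BrylAux

open MvPolynomial Finset
namespace BrylAux2

theorem hom_wittPolynomial (p : ℕ) [Fact p.Prime] (k : ℕ) :
    (wittPolynomial p ℚ k).IsWeightedHomogeneous (fun i => p ^ i) (p ^ k) := by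
  rw [wittPolynomial]
  apply IsWeightedHomogeneous.sum
  intro i hi
  apply isWeightedHomogeneous_monomial
  rw [Finsupp.weight_apply, Finsupp.sum_single_index (by simp)]
  have hik : i ≤ k := Nat.lt_succ_iff.mp (Finset.mem_range.mp hi)
  simp only [smul_eq_mul]
  rw [← pow_add, Nat.sub_add_cancel hik]

theorem hom_xInTermsOfW (p : ℕ) [Fact p.Prime] (n : ℕ) :
    (xInTermsOfW p ℚ n).IsWeightedHomogeneous (fun i => p ^ i) (p ^ n) := by
  induction n using Nat.strong_induction_on with
  | _ n ih =>
    rw [xInTermsOfW_eq]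
    have h1 : ((X n - ∑ i ∈ range n, C ((p:ℚ) ^ i) * xInTermsOfW p ℚ i ^ p ^ (n - i))
        : MvPolynomial ℕ ℚ).IsWeightedHomogeneous (fun i => p ^ i) (p ^ n) := by
      apply BrylAux.hom_sub
      · exact isWeightedHomogeneous_X ℚ _ n
      · apply IsWeightedHomogeneous.sum
        intro i hi
        have hin : i ≤ n := le_of_lt (Finset.mem_range.mp hi)
        have h2 := (isWeightedHomogeneous_C (fun i : ℕ => p ^ i) ((p:ℚ) ^ i)).mul
          (BrylAux.hom_pow (ih i (Finset.mem_range.mp hi)) (p ^ (n - i)))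
        have h3 : 0 + p ^ (n - i) * p ^ i = p ^ n := by
          rw [zero_add, ← pow_add, Nat.sub_add_cancel hin]
        rwa [h3] at h2
    have h4 := h1.mul (isWeightedHomogeneous_C (fun i : ℕ => p ^ i) ((⅟(p:ℚ)) ^ n))
    rwa [add_zero] at h4

theorem hom_wittStructureRat (p : ℕ) [Fact p.Prime] (b₀ : Fin 2) (k : ℕ) :
    (wittStructureRat p (X 0 * X 1 : MvPolynomial (Fin 2) ℚ) k).IsWeightedHomogeneous
      (fun bi => if bi.1 = b₀ then p ^ bi.2 else 0) (p ^ k) := by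
  rw [wittStructureRat]
  have hb : ∀ j : ℕ,
      ((bind₁ (fun b : Fin 2 => rename (Prod.mk b) (wittPolynomial p ℚ j)))
        (X 0 * X 1)).IsWeightedHomogeneous
        (fun bi : Fin 2 × ℕ => if bi.1 = b₀ then p ^ bi.2 else 0) (p ^ j) := by
    intro j
    rw [map_mul, bind₁_X_right, bind₁_X_right]
    have hr : ∀ b : Fin 2, (rename (Prod.mk b) (wittPolynomial p ℚ j)).IsWeightedHomogeneous
        (fun bi : Fin 2 × ℕ => if bi.1 = b₀ then p ^ bi.2 else 0)
        (if b = b₀ then p ^ j else 0) := by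
      intro b
      apply BrylAux.hom_rename
      by_cases hb : b = b₀
      · have : ((fun bi : Fin 2 × ℕ => if bi.1 = b₀ then p ^ bi.2 else 0) ∘ Prod.mk b)
            = fun i : ℕ => p ^ i := by funext i; simp [hb]
        rw [this, if_pos hb]
        exact hom_wittPolynomial p j
      · have : ((fun bi : Fin 2 × ℕ => if bi.1 = b₀ then p ^ bi.2 else 0) ∘ Prod.mk b)
            = fun _ : ℕ => 0 := by funext i; simp [hb]
        rw [this, if_neg hb]
        exact BrylAux.hom_zero_weight _
    have h5 := (hr 0).mul (hr 1)
    have h6 : (if (0 : Fin 2) = b₀ then p ^ j else 0) + (if (1 : Fin 2) = b₀ then p ^ j else 0)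
        = p ^ j := by fin_cases b₀ <;> simp
    rwa [h6] at h5
  exact BrylAux.hom_aeval _ hb (hom_xInTermsOfW p k)

theorem hom_wittMul (p : ℕ) [Fact p.Prime] (b₀ : Fin 2) (k : ℕ) :
    (WittVector.wittMul p k).IsWeightedHomogeneous
      (fun bi => if bi.1 = b₀ then p ^ bi.2 else 0) (p ^ k) := by
  intro d hd
  have h1 : map (Int.castRingHom ℚ) (WittVector.wittMul p k)
      = wittStructureRat p (X 0 * X 1) k := by
    have : WittVector.wittMul p k = wittStructureInt p (X 0 * X 1) k := rfl
    rw [this, map_wittStructureInt]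
    simp
  apply hom_wittStructureRat p b₀ k (d := d)
  rw [← h1, coeff_map]
  exact_mod_cast Int.cast_ne_zero.mpr hd
end BrylAux2

namespace BrylAux3
variable {K : Type*} [Field K] {v : K → ℤ}

lemma v_one (hv_mul : ∀ x y : K, x ≠ 0 → y ≠ 0 → v (x * y) = v x + v y) : v 1 = 0 := by
  have := hv_mul 1 1 one_ne_zero one_ne_zero
  rw [mul_one] at this; omega

lemma v_pow (hv_mul : ∀ x y : K, x ≠ 0 → y ≠ 0 → v (x * y) = v x + v y)
    {z : K} (hz : z ≠ 0) (e : ℕ) : v (z ^ e) = e * v z := by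
  induction e with
  | zero => simpa using v_one hv_mul
  | succ e ih =>
    rw [pow_succ, hv_mul _ _ (pow_ne_zero e hz) hz, ih]
    push_cast; ring

lemma v_intCast (p : ℕ) [Fact p.Prime] {K : Type*} [Field K] [CharP K p] {v : K → ℤ} (hv_mul : ∀ x y : K, x ≠ 0 → y ≠ 0 → v (x * y) = v x + v y)
    (c : ℤ) (hc : (c : K) ≠ 0) : v (c : K) = 0 := by
  have hfr : ((c : K)) ^ p = (c : K) := by
    have := map_intCast (frobenius K p) c
    rwa [frobenius_def] at this
  have h1 : v ((c : K) ^ p) = p * v (c : K) := v_pow hv_mul hc p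
  rw [hfr] at h1
  have hp2 : 2 ≤ p := (Fact.out : p.Prime).two_le
  have : ((p : ℤ) - 1) * v (c : K) = 0 := by linarith
  rcases mul_eq_zero.mp this with h | h
  · exfalso; have : (2 : ℤ) ≤ (p : ℤ) := by exact_mod_cast hp2
    omega
  · exact h

lemma v_prod (hv_mul : ∀ x y : K, x ≠ 0 → y ≠ 0 → v (x * y) = v x + v y)
    {ι : Type*} (s : Finset ι) (f : ι → K) (hf : ∀ i ∈ s, f i ≠ 0) :
    (∏ i ∈ s, f i) ≠ 0 ∧ v (∏ i ∈ s, f i) = ∑ i ∈ s, v (f i) := by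
  classical
  induction s using Finset.cons_induction with
  | empty => simpa using v_one hv_mul
  | cons a s ha ih =>
    rw [Finset.prod_cons, Finset.sum_cons]
    have hfa := hf a (Finset.mem_cons_self a s)
    obtain ⟨h1, h2⟩ := ih (fun i hi => hf i (Finset.mem_cons_of_mem hi))
    exact ⟨mul_ne_zero hfa h1, by rw [hv_mul _ _ hfa h1, h2]⟩

lemma v_sum_bound
    (hv_add : ∀ x y : K, x ≠ 0 → y ≠ 0 → x + y ≠ 0 → min (v x) (v y) ≤ v (x + y))
    {ι : Type*} (s : Finset ι) (f : ι → K) (A B : ℤ) (hA : 0 ≤ A)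
    (h : ∀ t ∈ s, f t = 0 ∨ 0 ≤ A * v (f t) + B) :
    (∑ t ∈ s, f t) = 0 ∨ 0 ≤ A * v (∑ t ∈ s, f t) + B := by
  classical
  apply Finset.sum_induction f (fun z => z = 0 ∨ 0 ≤ A * v z + B) _ (Or.inl rfl) h
  rintro a b (rfl | ha) hb
  · simpa using hb
  rcases hb with rfl | hb
  · simpa using Or.inr ha
  by_cases hab : a + b = 0
  · exact Or.inl hab
  right
  by_cases ha0 : a = 0
  · subst ha0; simpa using hb
  by_cases hb0 : b = 0
  · subst hb0; simpa using ha
  have hmin := hv_add a b ha0 hb0 hab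
  rcases le_total (v a) (v b) with hle | hle
  · rw [min_eq_left hle] at hmin
    nlinarith [mul_le_mul_of_nonneg_left hmin hA]
  · rw [min_eq_right hle] at hmin
    nlinarith [mul_le_mul_of_nonneg_left hmin hA]
end BrylAux3

namespace BrylAux4
open MvPolynomial WittVector

lemma mul_coeff_bound (p : ℕ) [Fact p.Prime] {K : Type*} [Field K] [CharP K p]
    (v : K → ℤ)
    (hv_mul : ∀ x y : K, x ≠ 0 → y ≠ 0 → v (x * y) = v x + v y)
    (hv_add : ∀ x y : K, x ≠ 0 → y ≠ 0 → x + y ≠ 0 → min (v x) (v y) ≤ v (x + y))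
    (m : ℕ) (n n' : ℤ) (X Y : WittVector p K)
    (hX : ∀ i, i < m → X.coeff i = 0 ∨ 0 ≤ (p:ℤ)^(m-1-i) * v (X.coeff i) + n)
    (hY : ∀ i, i < m → Y.coeff i = 0 ∨ 0 ≤ (p:ℤ)^(m-1-i) * v (Y.coeff i) + n')
    (k : ℕ) (hk : k < m) :
    (X*Y).coeff k = 0 ∨ 0 ≤ (p:ℤ)^(m-1-k) * v ((X*Y).coeff k) + (n + n') := by
  classical
  have hp1 : 1 < p := (Fact.out : p.Prime).one_lt
  rw [WittVector.mul_coeff]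
  unfold WittVector.peval
  set z : Fin 2 × ℕ → K := Function.uncurry ![X.coeff, Y.coeff] with hzdef
  rw [aeval_def, eval₂_eq]
  apply BrylAux3.v_sum_bound hv_add _ _ _ _ (by positivity)
  intro d hd
  have hcoeffK : (algebraMap ℤ K) (coeff d (wittMul p k)) = ((coeff d (wittMul p k) : ℤ) : K) := by
    simp
  set c : ℤ := coeff d (wittMul p k) with hcdef
  rw [hcoeffK]
  by_cases hc : (c : K) = 0
  · left; rw [hc, zero_mul]
  by_cases hzz : ∀ bi ∈ d.support, z bi ≠ 0
  swap
  · push_neg at hzz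
    obtain ⟨bi, hbi, hbi0⟩ := hzz
    left
    rw [Finset.prod_eq_zero hbi
      (by rw [hbi0]; exact zero_pow (Finsupp.mem_support_iff.mp hbi)), mul_zero]
  right
  obtain ⟨hprod_ne, hprod_v⟩ := BrylAux3.v_prod hv_mul d.support (fun bi => z bi ^ d bi)
      (fun bi hbi => pow_ne_zero _ (hzz bi hbi))
  have hvterm : v ((c:K) * ∏ bi ∈ d.support, z bi ^ d bi)
      = ∑ bi ∈ d.support, (d bi : ℤ) * v (z bi) := by
    rw [hv_mul _ _ hc hprod_ne, BrylAux3.v_intCast p hv_mul c hc, hprod_v, zero_add]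
    exact Finset.sum_congr rfl fun bi hbi => BrylAux3.v_pow hv_mul (hzz bi hbi) (d bi)
  rw [hvterm]
  have hcZ : c ≠ 0 := fun h => hc (by rw [h]; simp)
  have hwt : ∀ b₀ : Fin 2,
      ∑ bi ∈ d.support, d bi * (if bi.1 = b₀ then p ^ bi.2 else 0) = p ^ k := by
    intro b₀
    have h := BrylAux2.hom_wittMul p b₀ k (d := d) hcZ
    rw [Finsupp.weight_apply, Finsupp.sum] at h
    simpa [smul_eq_mul] using h
  have hwtZ : ∀ b₀ : Fin 2,
      ∑ bi ∈ d.support, (d bi : ℤ) * (if bi.1 = b₀ then (p:ℤ) ^ bi.2 else 0) = (p:ℤ) ^ k := by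
    intro b₀
    have h2 := congrArg (fun t : ℕ => (t : ℤ)) (hwt b₀)
    push_cast at h2
    simpa using h2
  have hik : ∀ bi ∈ d.support, bi.2 ≤ k := by
    intro bi hbi
    have h1 : d bi * (if bi.1 = bi.1 then p ^ bi.2 else 0) ≤ p ^ k := by
      rw [← hwt bi.1]
      exact Finset.single_le_sum (f := fun bj => d bj * (if bj.1 = bi.1 then p ^ bj.2 else 0))
        (fun _ _ => Nat.zero_le _) hbi
    rw [if_pos rfl] at h1
    have h2 : p ^ bi.2 ≤ p ^ k :=
      le_trans (Nat.le_mul_of_pos_left _ (Nat.pos_of_ne_zero (Finsupp.mem_support_iff.mp hbi))) h1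
    exact (Nat.pow_le_pow_iff_right hp1).mp h2
  have hkM : k ≤ m - 1 := Nat.le_sub_one_of_lt hk
  have hpk : (0:ℤ) < (p:ℤ)^k := by positivity
  have hpm : (p:ℤ)^k * (p:ℤ)^(m-1-k) = (p:ℤ)^(m-1) := by
    rw [← pow_add, Nat.add_sub_cancel' hkM]
  set S : ℤ := ∑ bi ∈ d.support, (d bi : ℤ) * v (z bi) with hS
  have key : 0 ≤ (p:ℤ)^k * ((p:ℤ)^(m-1-k) * S + (n + n')) := by
    have hsplit : (p:ℤ)^k * ((p:ℤ)^(m-1-k) * S + (n + n'))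
        = ∑ bi ∈ d.support,
            ((p:ℤ)^(m-1) * ((d bi:ℤ) * v (z bi))
              + (d bi:ℤ) * (if bi.1 = 0 then (p:ℤ)^bi.2 else 0) * n
              + (d bi:ℤ) * (if bi.1 = 1 then (p:ℤ)^bi.2 else 0) * n') := by
      have hrhs : (∑ bi ∈ d.support,
            ((p:ℤ)^(m-1) * ((d bi:ℤ) * v (z bi))
              + (d bi:ℤ) * (if bi.1 = 0 then (p:ℤ)^bi.2 else 0) * n
              + (d bi:ℤ) * (if bi.1 = 1 then (p:ℤ)^bi.2 else 0) * n'))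
          = (p:ℤ)^(m-1) * S + ((p:ℤ)^k * n + (p:ℤ)^k * n') := by
        rw [Finset.sum_add_distrib, Finset.sum_add_distrib, ← Finset.mul_sum,
          ← Finset.sum_mul, ← Finset.sum_mul, hwtZ 0, hwtZ 1, hS, add_assoc]
      rw [hrhs, ← hpm]
      ring
    rw [hsplit]
    apply Finset.sum_nonneg
    intro bi hbi
    obtain ⟨b, i⟩ := bi
    have hik' : i ≤ k := hik (b, i) hbi
    have him : i < m := lt_of_le_of_lt hik' hk
    have hiM : i ≤ m - 1 := le_trans hik' hkM
    have hpmi : (p:ℤ)^(m-1) = (p:ℤ)^i * (p:ℤ)^(m-1-i) := by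
      rw [← pow_add, Nat.add_sub_cancel' hiM]
    rcases (by decide : ∀ b : Fin 2, b = 0 ∨ b = 1) b with rfl | rfl
    · have hz0 : z (0, i) = X.coeff i := by
        rw [hzdef]; simp [Function.uncurry]
      have hx := (hX i him).resolve_left (by rw [← hz0]; exact hzz (0, i) hbi)
      have heq : (p:ℤ)^(m-1) * ((d (0,i):ℤ) * v (z (0,i)))
              + (d (0,i):ℤ) * (if (0:Fin 2) = 0 then (p:ℤ)^i else 0) * n
              + (d (0,i):ℤ) * (if (0:Fin 2) = 1 then (p:ℤ)^i else 0) * n'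
          = (d (0,i):ℤ) * (p:ℤ)^i * ((p:ℤ)^(m-1-i) * v (X.coeff i) + n) := by
        rw [hz0, hpmi, if_pos rfl, if_neg (by decide)]
        ring
      rw [heq]
      exact mul_nonneg (mul_nonneg (Int.natCast_nonneg _) (by positivity)) hx
    · have hz1 : z (1, i) = Y.coeff i := by
        rw [hzdef]; simp [Function.uncurry]
      have hy := (hY i him).resolve_left (by rw [← hz1]; exact hzz (1, i) hbi)
      have heq : (p:ℤ)^(m-1) * ((d (1,i):ℤ) * v (z (1,i)))
              + (d (1,i):ℤ) * (if (1:Fin 2) = 0 then (p:ℤ)^i else 0) * n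
              + (d (1,i):ℤ) * (if (1:Fin 2) = 1 then (p:ℤ)^i else 0) * n'
          = (d (1,i):ℤ) * (p:ℤ)^i * ((p:ℤ)^(m-1-i) * v (Y.coeff i) + n') := by
        rw [hz1, hpmi, if_pos rfl, if_neg (by decide)]
        ring
      rw [heq]
      exact mul_nonneg (mul_nonneg (Int.natCast_nonneg _) (by positivity)) hy
  have h0 : (p:ℤ)^k * 0 ≤ (p:ℤ)^k * ((p:ℤ)^(m-1-k) * S + (n + n')) := by
    rw [mul_zero]; exact key
  exact le_of_mul_le_mul_left h0 hpk
end BrylAux4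


/-- Multiplicativity of the Brylinski filtration: for `K` the fraction field
of a discrete valuation ring `A` of characteristic `p`, with normalized
valuation `v`, one has `fil_n W_m(K) · fil_{n'} W_m(K) ⊆ fil_{n+n'} W_m(K)`.
In particular (second conjunct), `fil_n W_m(K)` is stable under multiplication
by elements of `W_m(A)` (those Witt vectors all of whose coordinates `a_i`
satisfy `a_i = 0` or `v(a_i) ≥ 0`), i.e. it is a `W_m(A)`-submodule of
`W_m(K)`. -/
theorem brylinskiFil_mul (p : ℕ) [Fact p.Prime]
    (K : Type*) [Field K] [CharP K p] (v : K → ℤ)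
    (hv_mul : ∀ x y : K, x ≠ 0 → y ≠ 0 → v (x * y) = v x + v y)
    (hv_add : ∀ x y : K, x ≠ 0 → y ≠ 0 → x + y ≠ 0 → min (v x) (v y) ≤ v (x + y))
    (hv_norm : ∃ π : K, π ≠ 0 ∧ v π = 1)
    (m : ℕ) (hm : 1 ≤ m) :
    (∀ (n n' : ℤ) (x y : TruncatedWittVector p m K),
        x ∈ brylinskiFil p v m n → y ∈ brylinskiFil p v m n' →
          x * y ∈ brylinskiFil p v m (n + n')) ∧
    (∀ (n : ℤ) (a x : TruncatedWittVector p m K),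
        (∀ i : Fin m, a.coeff i = 0 ∨ 0 ≤ v (a.coeff i)) →
          x ∈ brylinskiFil p v m n → a * x ∈ brylinskiFil p v m n) := by
  have key : ∀ (n n' : ℤ) (x y : TruncatedWittVector p m K),
      x ∈ brylinskiFil p v m n → y ∈ brylinskiFil p v m n' →
        x * y ∈ brylinskiFil p v m (n + n') := by
    intro n n' x y hx hy
    set X : WittVector p K := WittVector.mk p
      (fun i => if h : i < m then x.coeff ⟨i, h⟩ else 0) with hXdef
    set Y : WittVector p K := WittVector.mk p
      (fun i => if h : i < m then y.coeff ⟨i, h⟩ else 0) with hYdef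
    have hXx : WittVector.truncate m X = x := by
      ext i
      rw [WittVector.coeff_truncate]
      simp [hXdef, WittVector.coeff_mk, i.is_lt]
    have hYy : WittVector.truncate m Y = y := by
      ext i
      rw [WittVector.coeff_truncate]
      simp [hYdef, WittVector.coeff_mk, i.is_lt]
    have hxy : x * y = WittVector.truncate m (X * Y) := by
      rw [map_mul, hXx, hYy]
    intro i
    have hcoeff : (x * y).coeff i = (X * Y).coeff (i : ℕ) := by
      rw [hxy, WittVector.coeff_truncate]
    rw [hcoeff]
    apply BrylAux4.mul_coeff_bound p v hv_mul hv_add m n n' X Y _ _ (i : ℕ) i.is_lt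
    · intro j hj
      have := hx ⟨j, hj⟩
      simpa [hXdef, WittVector.coeff_mk, hj] using this
    · intro j hj
      have := hy ⟨j, hj⟩
      simpa [hYdef, WittVector.coeff_mk, hj] using this
  refine ⟨key, ?_⟩
  intro n a x ha hx
  have h0 : a ∈ brylinskiFil p v m 0 := by
    intro i
    refine (ha i).imp id (fun h => ?_)
    have : (0:ℤ) ≤ (p : ℤ) ^ (m - 1 - (i : ℕ)) * v (a.coeff i) :=
      mul_nonneg (by positivity) h
    omega
  have := key 0 n a x h0 hx
  rwa [zero_add] at this
end

section
/- Let p be a prime, A a discrete valuation ring of characteristic p with fraction field K and normalized valuation v, and m ≥ 2, n ∈ ℤ. Then the truncation map W_m(K) → W_{m-1}(K) restricts to a surjection fil_n W_m(K) → fil_{⌊n/p⌋} W_{m-1}(K), and its kernel on fil_n W_m(K) is exactly V^{m-1}({ a ∈ K : a = 0 or v(a) + n ≥ 0 }). That is, there is a short exact sequence 0 → {a ∈ K : v(a)+n ≥ 0} → fil_n W_m(K) → fil_{⌊n/p⌋} W_{m-1}(K) → 0, where the first map is V^{m-1} composed with the Teichmüller-coordinate inclusion. -/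
private lemma vcoeff_lt {p : ℕ} [Fact p.Prime] {R : Type*} [CommRing R]
    (x : WittVector p R) : ∀ k i : ℕ, i < k →
    ((⇑(WittVector.verschiebung : WittVector p R →+ WittVector p R))^[k] x).coeff i = 0 := by
  intro k
  induction k with
  | zero => omega
  | succ k ih =>
    intro i h
    rw [Function.iterate_succ_apply']
    match i with
    | 0 => exact WittVector.verschiebung_coeff_zero _
    | Nat.succ j =>
      rw [show ((WittVector.verschiebung : WittVector p R →+ WittVector p R) _).coeff (j + 1) =
        _ from WittVector.verschiebung_coeff_succ _ j]
      exact ih j (by omega)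

private lemma vcoeff_eq {p : ℕ} [Fact p.Prime] {R : Type*} [CommRing R]
    (a : R) (k : ℕ) :
    ((⇑(WittVector.verschiebung : WittVector p R →+ WittVector p R))^[k]
      (WittVector.teichmuller p a)).coeff k = a := by
  have := WittVector.iterate_verschiebung_coeff (p := p) (R := R)
    (WittVector.teichmuller p a) k 0
  rw [Nat.zero_add] at this
  rw [this, WittVector.teichmuller_coeff_zero]

private lemma floor_equiv {p : ℕ} (hp : 0 < p) (t n : ℤ) :
    0 ≤ (p : ℤ) * t + n ↔ 0 ≤ t + ⌊(n : ℚ) / (p : ℚ)⌋ := by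
  rw [Rat.floor_intCast_div_natCast n p]
  obtain ⟨q, r, hn, hr0, hrp⟩ : ∃ q r : ℤ, n = (p : ℤ) * q + r ∧ 0 ≤ r ∧ r < (p : ℤ) :=
    ⟨n / (p : ℤ), n % (p : ℤ), (Int.mul_ediv_add_emod n p).symm,
      Int.emod_nonneg n (by exact_mod_cast hp.ne'),
      Int.emod_lt_of_pos n (by exact_mod_cast hp)⟩
  have hq : n / (p : ℤ) = q := by
    have hpne : ((p : ℤ)) ≠ 0 := by exact_mod_cast hp.ne'
    rw [hn, add_comm, Int.add_mul_ediv_left r q hpne,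
      Int.ediv_eq_zero_of_lt hr0 hrp, zero_add]
  rw [hq, hn]
  have hp' : (0 : ℤ) < (p : ℤ) := by exact_mod_cast hp
  constructor
  · intro h
    by_contra hc
    push_neg at hc
    have : t + q ≤ -1 := by omega
    nlinarith
  · intro h
    nlinarith

/-- For `K` the fraction field of a discrete valuation ring of characteristic
`p` with normalized valuation `v`, and `m ≥ 2`, `n ∈ ℤ`, there is a short
exact sequence
`0 → {a ∈ K : v(a)+n ≥ 0} → fil_n W_m(K) → fil_{⌊n/p⌋} W_{m-1}(K) → 0`,
where the first map is `a ↦ V^{m-1}([a])` (Verschiebung iterated on the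
Teichmüller lift) and the second is the truncation map.  Concretely:
(1) `a ↦ V^{m-1}([a])` sends `{a : a = 0 ∨ v(a)+n ≥ 0}` into `fil_n W_m(K)`;
(2) this map is injective;
(3) for `x ∈ fil_n W_m(K)`, the truncation of `x` vanishes iff `x` is of the
    form `V^{m-1}([a])` with `a = 0 ∨ v(a)+n ≥ 0` (exactness in the middle);
(4) truncation maps `fil_n W_m(K)` into `fil_{⌊n/p⌋} W_{m-1}(K)`, and
(5) it does so surjectively. -/
theorem brylinskiFil_truncate_exact (p : ℕ) [Fact p.Prime]
    (K : Type*) [Field K] [CharP K p] (v : K → ℤ)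
    (hv_mul : ∀ x y : K, x ≠ 0 → y ≠ 0 → v (x * y) = v x + v y)
    (hv_add : ∀ x y : K, x ≠ 0 → y ≠ 0 → x + y ≠ 0 → min (v x) (v y) ≤ v (x + y))
    (hv_norm : ∃ π : K, π ≠ 0 ∧ v π = 1)
    (m : ℕ) (hm : 2 ≤ m) (n : ℤ) :
    (∀ a : K, (a = 0 ∨ 0 ≤ v a + n) →
        WittVector.truncate m
            ((⇑(WittVector.verschiebung : WittVector p K →+ WittVector p K))^[m - 1]
              (WittVector.teichmuller p a)) ∈ brylinskiFil p v m n) ∧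
    (∀ a b : K,
        WittVector.truncate m
            ((⇑(WittVector.verschiebung : WittVector p K →+ WittVector p K))^[m - 1]
              (WittVector.teichmuller p a)) =
          WittVector.truncate m
            ((⇑(WittVector.verschiebung : WittVector p K →+ WittVector p K))^[m - 1]
              (WittVector.teichmuller p b)) → a = b) ∧
    (∀ x ∈ brylinskiFil p v m n,
        TruncatedWittVector.truncate (Nat.sub_le m 1) x = 0 ↔
          ∃ a : K, (a = 0 ∨ 0 ≤ v a + n) ∧
            x = WittVector.truncate m
              ((⇑(WittVector.verschiebung : WittVector p K →+ WittVector p K))^[m - 1]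
                (WittVector.teichmuller p a))) ∧
    (∀ x ∈ brylinskiFil p v m n,
        TruncatedWittVector.truncate (Nat.sub_le m 1) x ∈
          brylinskiFil p v (m - 1) ⌊(n : ℚ) / (p : ℚ)⌋) ∧
    (∀ y ∈ brylinskiFil p v (m - 1) ⌊(n : ℚ) / (p : ℚ)⌋,
        ∃ x ∈ brylinskiFil p v m n,
          TruncatedWittVector.truncate (Nat.sub_le m 1) x = y) := by
  have hp : 0 < p := (Fact.out : p.Prime).pos
  -- coefficients of truncate m (V^[m-1] [a])
  have hcoeff : ∀ (a : K) (i : Fin m),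
      (WittVector.truncate m
        ((⇑(WittVector.verschiebung : WittVector p K →+ WittVector p K))^[m - 1]
          (WittVector.teichmuller p a))).coeff i =
      if (i : ℕ) = m - 1 then a else 0 := by
    intro a i
    rw [WittVector.coeff_truncate]
    by_cases h : (i : ℕ) = m - 1
    · rw [if_pos h, h, vcoeff_eq]
    · rw [if_neg h]
      have : (i : ℕ) < m - 1 := by have := i.isLt; omega
      exact vcoeff_lt _ _ _ this
  refine ⟨?_, ?_, ?_, ?_, ?_⟩
  · -- (1)
    intro a ha i
    rw [hcoeff]
    by_cases h : (i : ℕ) = m - 1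
    · rw [if_pos h]
      rcases ha with ha | ha
      · exact Or.inl ha
      · right
        rw [h]
        simp only [Nat.sub_self, pow_zero, one_mul]
        exact ha
    · rw [if_neg h]; exact Or.inl rfl
  · -- (2)
    intro a b hab
    have := congrArg (fun z => TruncatedWittVector.coeff ⟨m - 1, by omega⟩ z) hab
    simpa [hcoeff] using this
  · -- (3)
    intro x hx
    constructor
    · intro h0
      have hlow : ∀ i : Fin m, (i : ℕ) < m - 1 → x.coeff i = 0 := by
        intro i hi
        have := congrArg (fun z => TruncatedWittVector.coeff ⟨(i : ℕ), hi⟩ z) h0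
        simp only [TruncatedWittVector.coeff_truncate, TruncatedWittVector.coeff_zero] at this
        convert this using 2
        exact Fin.ext rfl
      set a := x.coeff ⟨m - 1, by omega⟩ with ha
      refine ⟨a, ?_, ?_⟩
      · rcases hx ⟨m - 1, by omega⟩ with h | h
        · exact Or.inl h
        · right
          simpa [Nat.sub_self] using h
      · apply TruncatedWittVector.ext
        intro i
        rw [hcoeff]
        by_cases h : (i : ℕ) = m - 1
        · rw [if_pos h]
          have : i = ⟨m - 1, by omega⟩ := Fin.ext h
          rw [this]
        · rw [if_neg h]
          exact hlow i (by have := i.isLt; omega)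
    · rintro ⟨a, _, rfl⟩
      apply TruncatedWittVector.ext
      intro i
      rw [TruncatedWittVector.coeff_truncate, hcoeff, TruncatedWittVector.coeff_zero]
      have : ((Fin.castLE (Nat.sub_le m 1) i : Fin m) : ℕ) < m - 1 := i.isLt
      rw [if_neg (by omega)]
  · -- (4)
    intro x hx i
    rw [TruncatedWittVector.coeff_truncate]
    rcases hx (Fin.castLE (Nat.sub_le m 1) i) with h | h
    · exact Or.inl h
    · right
      have hi : (i : ℕ) < m - 1 := i.isLt
      have hexp : m - 1 - ((Fin.castLE (Nat.sub_le m 1) i : Fin m) : ℕ) =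
          (m - 1 - 1 - (i : ℕ)) + 1 := by
        simp only [Fin.coe_castLE]
        omega
      rw [hexp, pow_succ, mul_comm _ ((p : ℤ)), mul_assoc] at h
      exact (floor_equiv hp _ n).mp h
  · -- (5)
    intro y hy
    set x : TruncatedWittVector p m K := TruncatedWittVector.mk p
      (fun i => if h : (i : ℕ) < m - 1 then y.coeff ⟨(i : ℕ), h⟩ else 0) with hxdef
    refine ⟨x, ?_, ?_⟩
    · intro i
      rw [hxdef, TruncatedWittVector.coeff_mk]
      by_cases h : (i : ℕ) < m - 1
      · rw [dif_pos h]
        rcases hy ⟨(i : ℕ), h⟩ with h' | h'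
        · exact Or.inl h'
        · right
          have hexp : m - 1 - (i : ℕ) = (m - 1 - 1 - (i : ℕ)) + 1 := by omega
          rw [hexp, pow_succ, mul_comm _ ((p : ℤ)), mul_assoc]
          exact (floor_equiv hp _ n).mpr h'
      · rw [dif_neg h]; exact Or.inl rfl
    · apply TruncatedWittVector.ext
      intro i
      rw [TruncatedWittVector.coeff_truncate, hxdef, TruncatedWittVector.coeff_mk]
      have hi : (i : ℕ) < m - 1 := i.isLt
      rw [dif_pos (by simpa using hi)]
      exact congrArg y.coeff (Fin.ext (by simp))
end

section
/- Let S be a Noetherian local commutative ring with maximal ideal 𝔪, let M be a finitely generated S-module, and let M̂ denote its 𝔪-adic completion with canonical map ι : M → M̂. Let N' ⊆ M̂ be an Ŝ-submodule and let N ⊆ M be an S-submodule such that ι(N) ⊆ N' and ι(N) is dense in N' for the 𝔪-adic topology of M̂ (i.e., for every k ≥ 0, N' ⊆ ι(N) + 𝔪^k·M̂). Then N equals the preimage of N' under ι, i.e., every x ∈ M with ι(x) ∈ N' lies in N. -/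
open IsLocalRing


/-- Universe-polymorphic Krull intersection theorem for Noetherian local rings. -/
theorem krull_intersection_aux (S : Type*) [CommRing S] [IsNoetherianRing S]
    [IsLocalRing S] (P : Type*) [AddCommGroup P] [Module S P] [Module.Finite S P] :
    (⨅ i : ℕ, (maximalIdeal S) ^ i • ⊤ : Submodule S P) = ⊥ := by
  obtain ⟨n, f, hf⟩ := Module.Finite.exists_fin' S P
  let e := f.quotKerEquivOfSurjective hf
  rw [eq_bot_iff]
  intro x hx
  have hx' : e.symm x ∈
      (⨅ i : ℕ, (maximalIdeal S) ^ i • ⊤ :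
        Submodule S ((Fin n → S) ⧸ LinearMap.ker f)) := by
    rw [Submodule.mem_iInf] at hx ⊢
    intro i
    have h1 : e.symm.toLinearMap x ∈
        Submodule.map e.symm.toLinearMap ((maximalIdeal S) ^ i • ⊤) :=
      Submodule.mem_map_of_mem (f := e.symm.toLinearMap) (hx i)
    rw [Submodule.map_smul''] at h1
    exact Submodule.smul_mono le_rfl le_top h1
  rw [Ideal.iInf_pow_smul_eq_bot_of_isLocalRing _
    ((maximalIdeal.isMaximal S).ne_top), Submodule.mem_bot] at hx'
  exact e.symm.injective (by simp [hx'])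

/-- Let `S` be a Noetherian local ring with maximal ideal `𝔪`, `M` a finitely
generated `S`-module with `𝔪`-adic completion `M̂` and canonical map
`ι : M → M̂`.  Let `N' ⊆ M̂` be an `Ŝ`-submodule and `N ⊆ M` an `S`-submodule
with `ι(N) ⊆ N'` such that `ι(N)` is dense in `N'` for the `𝔪`-adic topology
(for every `k`, `N' ⊆ ι(N) + 𝔪^k·M̂`).  Then `N` is the preimage of `N'`
under `ι`:  every `x ∈ M` with `ι(x) ∈ N'` lies in `N`. -/
theorem mem_of_adicCompletion_mem (S : Type*) [CommRing S] [IsNoetherianRing S]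
    [IsLocalRing S] (M : Type*) [AddCommGroup M] [Module S M] [Module.Finite S M]
    (N : Submodule S M)
    (N' : Submodule (AdicCompletion (maximalIdeal S) S)
        (AdicCompletion (maximalIdeal S) M))
    (hNN' : ∀ z ∈ N, AdicCompletion.of (maximalIdeal S) M z ∈ N')
    (hdense : ∀ k : ℕ, ∀ y ∈ N', ∃ z ∈ N,
        y - AdicCompletion.of (maximalIdeal S) M z ∈
          ((maximalIdeal S) ^ k •
            (⊤ : Submodule S (AdicCompletion (maximalIdeal S) M)))) :
    ∀ x : M, AdicCompletion.of (maximalIdeal S) M x ∈ N' → x ∈ N := by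
  intro x hx
  set I := maximalIdeal S with hI
  -- Krull intersection theorem in `M ⧸ N`.
  have hkrull : (⨅ i : ℕ, I ^ i • ⊤ : Submodule S (M ⧸ N)) = ⊥ :=
    krull_intersection_aux S (M ⧸ N)
  have hmem : ∀ k : ℕ, (N.mkQ x) ∈ (I ^ k • ⊤ : Submodule S (M ⧸ N)) := by
    intro k
    obtain ⟨z, hzN, hz⟩ := hdense k _ hx
    -- elements of `I ^ k • ⊤` evaluate to zero under `eval I M k`
    have hker : ∀ y ∈ (I ^ k • ⊤ : Submodule S (AdicCompletion I M)),
        AdicCompletion.eval I M k y = 0 := by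
      intro y hy
      refine Submodule.smul_induction_on hy ?_ ?_
      · intro r hr m _
        obtain ⟨m', hm'⟩ := (I ^ k • ⊤ : Submodule S M).mkQ_surjective
          (AdicCompletion.eval I M k m)
        rw [map_smul, ← hm']
        have : r • m' ∈ (I ^ k • ⊤ : Submodule S M) :=
          Submodule.smul_mem_smul hr trivial
        rw [← map_smul, Submodule.mkQ_apply, Submodule.Quotient.mk_eq_zero]
        exact this
      · intro a b ha hb
        rw [map_add, ha, hb, add_zero]
    have h0 : AdicCompletion.eval I M k
        (AdicCompletion.of I M x - AdicCompletion.of I M z) = 0 := hker _ hz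
    rw [map_sub, AdicCompletion.eval_of, AdicCompletion.eval_of, sub_eq_zero] at h0
    -- hence `x - z ∈ I ^ k • ⊤` in `M`
    have hxz : x - z ∈ (I ^ k • ⊤ : Submodule S M) :=
      (Submodule.Quotient.eq _).mp h0
    -- therefore `mkQ x = mkQ (x - z)` lands in `I ^ k • ⊤` of the quotient
    have h1 : N.mkQ x = N.mkQ (x - z) := by
      simp [map_sub, (Submodule.Quotient.mk_eq_zero N).mpr hzN]
    rw [h1]
    have : N.mkQ (x - z) ∈ Submodule.map N.mkQ (I ^ k • ⊤ : Submodule S M) :=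
      Submodule.mem_map_of_mem hxz
    rw [Submodule.map_smul''] at this
    exact Submodule.smul_mono le_rfl le_top this
  have : (N.mkQ x) ∈ (⊥ : Submodule S (M ⧸ N)) := by
    rw [← hkrull]
    exact (Submodule.mem_iInf _).mpr hmem
  simpa [Submodule.Quotient.mk_eq_zero] using this
end
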